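/- (Lemma A.5, Lorenz gauge) Let s be a real number with 9/10 < s ≤ 1. Define the sequences (ρ_k)_{k≥1} and (σ_k)_{k≥1} by σ_1 = (3/2 − s/3 − s²)/(1+s), ρ_1 = (7/2 + s − 4s²)/6, ρ_{k+1} = (7/3 − 3s + 2s²/3 + (2s−1)σ_k)/2 and σ_{k+1} = (19/6 − 25s/6 + s² + (3s−2)ρ_{k+1})/(1+s) for k ≥ 1. Then for every k ≥ 1: 1/2 > σ_k > (3/2)(1−s) and 1/2 > ρ_k > 1 − s. -/

import Mathlib

/-!
Both recursions are increasing affine maps, `ρ_{k+1} = f(σ_k)` and `σ_{k+1} = g(ρ_{k+1})`, so it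
suffices that `f` maps the interval `I_σ = ((3/2)(1-s), 1/2)` into `I_ρ = (1-s, 1/2)` and `g` maps
`I_ρ` back into `I_σ`. By monotonicity this is a check at the endpoints, where the differences
factor into `(2s-1)`, `(3s-2)`, `(1-s)` and `(5-2s)`; hence everything holds as soon as
`2/3 < s ≤ 1`, and induction on `k` starting from `σ_1 ∈ I_σ`, `ρ_1 ∈ I_ρ` finishes the proof.
-/

open Set

lemma strictMono_affine_div {a b c : ℝ} (hb : 0 < b) (hc : 0 < c) :
    StrictMono fun x : ℝ => (a + b * x) / c :=
  ((strictMono_mul_left_of_pos hb).const_add a).div_const hc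

namespace LorenzGauge

noncomputable section

def rhoStep (s σ : ℝ) : ℝ := (7/3 - 3*s + 2*s^2/3 + (2*s - 1) * σ) / 2

def sigmaStep (s ρ : ℝ) : ℝ := (19/6 - 25*s/6 + s^2 + (3*s - 2) * ρ) / (1 + s)

variable {s : ℝ}

lemma strictMono_rhoStep (hs : 1/2 < s) : StrictMono (rhoStep s) :=
  strictMono_affine_div (by linarith) two_pos

lemma strictMono_sigmaStep (hs : 2/3 < s) : StrictMono (sigmaStep s) :=
  strictMono_affine_div (by linarith) (by linarith)

lemma mapsTo_rhoStep (hs : 1/2 < s) (hs1 : s ≤ 1) :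
    MapsTo (rhoStep s) (Ioo (3/2 * (1 - s)) (1/2)) (Ioo (1 - s) (1/2)) := by
  have hlow : rhoStep s (3/2 * (1 - s)) - (1 - s) = 7/12 * (2*s - 1) * (1 - s) := by
    unfold rhoStep; ring
  have hupp : 1/2 - rhoStep s (1/2) = (2*s - 1) * (5 - 2*s) / 12 := by
    unfold rhoStep; ring
  refine (strictMono_rhoStep hs).mapsTo_Ioo.mono_right (Ioo_subset_Ioo ?_ ?_)
  · nlinarith
  · nlinarith

lemma mapsTo_sigmaStep (hs : 2/3 < s) (hs1 : s ≤ 1) :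
    MapsTo (sigmaStep s) (Ioo (1 - s) (1/2)) (Ioo (3/2 * (1 - s)) (1/2)) := by
  have hs0 : 0 < 1 + s := by linarith
  have hlow : sigmaStep s (1 - s) - 3/2 * (1 - s) = (3*s - 2) * (1 - s) / (6 * (1 + s)) := by
    unfold sigmaStep; field_simp; ring
  have hupp : 1/2 - sigmaStep s (1/2) = (3*s - 2) * (5 - 2*s) / (6 * (1 + s)) := by
    unfold sigmaStep; field_simp; ring
  refine (strictMono_sigmaStep hs).mapsTo_Ioo.mono_right (Ioo_subset_Ioo ?_ ?_)
  · have : 0 ≤ (3*s - 2) * (1 - s) / (6 * (1 + s)) := by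
      apply div_nonneg <;> nlinarith
    linarith
  · have : 0 ≤ (3*s - 2) * (5 - 2*s) / (6 * (1 + s)) := by
      apply div_nonneg <;> nlinarith
    linarith

lemma sigma_one_mem (hs : 2/3 < s) :
    (3/2 - s/3 - s^2) / (1 + s) ∈ Ioo (3/2 * (1 - s)) (1/2) := by
  have hs0 : 0 < 1 + s := by linarith
  constructor
  · rw [lt_div_iff₀ hs0]; nlinarith
  · rw [div_lt_iff₀ hs0]; nlinarith

lemma rho_one_mem (hs : 1/2 < s) (hs1 : s < 5/4) :
    (7/2 + s - 4*s^2) / 6 ∈ Ioo (1 - s) (1/2) :=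
  ⟨by nlinarith, by nlinarith⟩

end

end LorenzGauge

open LorenzGauge in
/-- Lemma A.5 (Lorenz gauge): for every `k ≥ 1`,
`1/2 > σ_k > (3/2)(1−s)` and `1/2 > ρ_k > 1 − s`. -/
theorem stmt14 (s : ℝ) (hs1 : 9/10 < s) (hs2 : s ≤ 1)
    (ρ σ : ℕ → ℝ)
    (hσ1 : σ 1 = (3/2 - s/3 - s^2) / (1 + s))
    (hρ1 : ρ 1 = (7/2 + s - 4*s^2) / 6)
    (hρ : ∀ k, 1 ≤ k → ρ (k+1) = (7/3 - 3*s + 2*s^2/3 + (2*s - 1) * σ k) / 2)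
    (hσ : ∀ k, 1 ≤ k → σ (k+1) = (19/6 - 25*s/6 + s^2 + (3*s - 2) * ρ (k+1)) / (1 + s)) :
    ∀ k, 1 ≤ k →
      (1/2 > σ k ∧ σ k > (3/2) * (1 - s)) ∧ (1/2 > ρ k ∧ ρ k > 1 - s) := by
  intro k hk
  suffices h : σ k ∈ Ioo (3/2 * (1 - s)) (1/2) ∧ ρ k ∈ Ioo (1 - s) (1/2) from
    ⟨⟨h.1.2, h.1.1⟩, h.2.2, h.2.1⟩
  induction k, hk using Nat.le_induction with
  | base =>
    rw [hσ1, hρ1]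
    exact ⟨sigma_one_mem (by linarith), rho_one_mem (by linarith) (by linarith)⟩
  | succ k hk ih =>
    have hρk : ρ (k+1) ∈ Ioo (1 - s) (1/2) := by
      rw [hρ k hk]; exact mapsTo_rhoStep (by linarith) hs2 ih.1
    refine ⟨?_, hρk⟩
    rw [hσ k hk]; exact mapsTo_sigmaStep (by linarith) hs2 hρk
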